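/- For k ≥ 5, every point of P^k with even x-coordinate lies strictly below every line determined by two points of P^k with odd x-coordinate. -/
import Mathlib


/-- `f 1 = 0` and `f i = 2 ^ (i*(i-1)/2 - 1)` for `i ≥ 2`. -/
def f (i : ℕ) : ℤ := if i ≤ 1 then 0 else 2 ^ (i * (i - 1) / 2 - 1)

/-- `g 1 = 0` and `g i = f i - f (i-1)` for `i ≥ 2`. -/
def g (i : ℕ) : ℤ := if i ≤ 1 then 0 else f i - f (i - 1)

/-- The recursively defined drawing of the Horton set:
`P 0 = {(0,0)}` and `P i = {(2x,y) : (x,y) ∈ P (i-1)} ∪ {(2x+1, y + g i) : (x,y) ∈ P (i-1)}`. -/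
def P : ℕ → Finset (ℤ × ℤ)
  | 0 => {(0, 0)}
  | i + 1 =>
      ((P i).image fun p => (2 * p.1, p.2)) ∪
        ((P i).image fun p => (2 * p.1 + 1, p.2 + g (i + 1)))

/-- Orientation determinant of the triple `(p, q, r)`. -/
def det3 (p q r : ℤ × ℤ) : ℤ :=
  (q.1 - p.1) * (r.2 - p.2) - (q.2 - p.2) * (r.1 - p.1)

lemma f_nonneg (n : ℕ) : 0 ≤ f n := by unfold f; split <;> positivity

lemma f_one_le {n : ℕ} (h : 2 ≤ n) : 1 ≤ f n := by
  unfold f; rw [if_neg (by omega)]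
  have := pow_pos (by norm_num : (0:ℤ) < 2) (n * (n-1)/2 - 1)
  omega

lemma f_succ {n : ℕ} (h : 2 ≤ n) : f (n+1) = 2^n * f n := by
  obtain ⟨j, rfl⟩ : ∃ j, n = j + 2 := ⟨n - 2, by omega⟩
  unfold f
  rw [if_neg (by omega), if_neg (by omega), ← pow_add]
  congr 1
  show (j+3)*(j+3-1)/2 - 1 = (j+2) + ((j+2)*(j+2-1)/2 - 1)
  rw [show j+3-1 = j+2 from rfl, show j+2-1 = j+1 from rfl]
  have h2 : (j+3)*(j+2)/2 = (j+2)*(j+1)/2 + (j+2) := by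
    rw [show (j+3)*(j+2) = (j+2)*(j+1) + (j+2)*2 by ring]
    rw [Nat.add_mul_div_right _ _ (by norm_num)]
  have h3 : 1 ≤ (j+2)*(j+1)/2 := by
    rw [Nat.le_div_iff_mul_le (by norm_num)]
    nlinarith [Nat.zero_le j]
  omega

lemma f_step (n : ℕ) : f (n+1) = f n + g (n+1) := by
  unfold g
  rcases Nat.eq_zero_or_pos n with rfl | hn
  · norm_num [f]
  · rw [if_neg (by omega), show n+1-1 = n from rfl]; ring

lemma f_mono_succ (n : ℕ) : f n ≤ f (n+1) := by
  rcases Nat.lt_or_ge n 2 with h | h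
  · interval_cases n <;> norm_num [f]
  · rw [f_succ h]
    have h1 : (1:ℤ) ≤ 2^n := one_le_pow₀ (by norm_num)
    nlinarith [f_nonneg n]

lemma g_nonneg (n : ℕ) : 0 ≤ g n := by
  rcases n with _ | m
  · simp [g]
  · have := f_step m
    have := f_mono_succ m
    omega

lemma mem_P_succ {n : ℕ} {p : ℤ×ℤ} (hp : p ∈ P (n+1)) :
    (∃ q ∈ P n, p = (2*q.1, q.2)) ∨ (∃ q ∈ P n, p = (2*q.1+1, q.2 + g (n+1))) := by
  simp only [P, Finset.mem_union, Finset.mem_image] at hp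
  rcases hp with ⟨q,hq,h⟩|⟨q,hq,h⟩
  exacts [Or.inl ⟨q,hq,h.symm⟩, Or.inr ⟨q,hq,h.symm⟩]

lemma P_bounds : ∀ n, ∀ p ∈ P n, 0 ≤ p.1 ∧ p.1 < 2^n ∧ 0 ≤ p.2 ∧ p.2 ≤ f n := by
  intro n
  induction n with
  | zero => intro p hp; simp [P] at hp; simp [hp, f]
  | succ n ih =>
    intro p hp
    have hpw : (2:ℤ)^(n+1) = 2*2^n := by ring
    rcases mem_P_succ hp with ⟨q, hq, rfl⟩ | ⟨q, hq, rfl⟩ <;>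
      obtain ⟨h1, h2, h3, h4⟩ := ih q hq <;>
      simp only [hpw] <;>
      refine ⟨by linarith, by linarith, by linarith [g_nonneg (n+1)], by linarith [f_step n, g_nonneg (n+1)]⟩

set_option maxHeartbeats 1000000 in
lemma key (W F' F G a b c Ya Yb Yc : ℤ)
    (hW : 8 ≤ W) (hF1 : 1 ≤ F') (hF4 : 4*F' ≤ F) (hG : G = (W-1)*F)
    (ha0 : 0 ≤ a) (hab : a < b) (hbW : b < W) (hc0 : 0 ≤ c) (hcW : c < W)
    (hA : (a % 2 = 0 ∧ 0 ≤ Ya ∧ Ya ≤ F') ∨ (a % 2 = 1 ∧ F - F' ≤ Ya ∧ Ya ≤ F))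
    (hB : (b % 2 = 0 ∧ 0 ≤ Yb ∧ Yb ≤ F') ∨ (b % 2 = 1 ∧ F - F' ≤ Yb ∧ Yb ≤ F))
    (hC : (c % 2 = 0 ∧ 0 ≤ Yc ∧ Yc ≤ F') ∨ (c % 2 = 1 ∧ F - F' ≤ Yc ∧ Yc ≤ F)) :
    0 < 2*(b-a)*(G + Ya - Yc) + (Yb-Ya)*(2*c-2*a-1) := by
  subst hG
  have hd1 : (0:ℤ) ≤ b - a - 1 := by omega
  have hF0 : (4:ℤ) ≤ F := by linarith
  have hWF : (0:ℤ) ≤ (W-2)*F := mul_nonneg (by linarith) (by linarith)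
  have h3c : (0:ℤ) ≤ (b-a-1)*((W-2)*F) := mul_nonneg hd1 hWF
  have hGF' : (0:ℤ) ≤ (W-1)*F - F' := by nlinarith [hWF]
  have h3d : (0:ℤ) ≤ (b-a-1)*((W-1)*F - F') := mul_nonneg hd1 hGF'
  have hWF4 : (0:ℤ) ≤ (W-2)*(F-4*F') := mul_nonneg (by linarith) (by linarith)
  have hW8 : (0:ℤ) ≤ F'*(W-8) := mul_nonneg (by linarith) (by linarith)
  rcases hA with ⟨ha2, hYa0, hYa1⟩ | ⟨ha2, hYa0, hYa1⟩ <;>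
    rcases hB with ⟨hb2, hYb0, hYb1⟩ | ⟨hb2, hYb0, hYb1⟩ <;>
    rcases hC with ⟨hc2, hYc0, hYc1⟩ | ⟨hc2, hYc0, hYc1⟩ <;>
    rcases le_or_gt c a with hca | hca
  -- 1 aEbEcE ≤
  · linarith [mul_nonneg (by linarith : (0:ℤ) ≤ F' - (Yb-Ya)) (by linarith : (0:ℤ) ≤ 2*a-2*c+1),
      mul_nonneg (by linarith : (0:ℤ) ≤ F') (by linarith : (0:ℤ) ≤ 2*W-3-(2*a-2*c+1)),
      h3c, hWF4, hW8,
      mul_nonneg (by linarith : (0:ℤ) ≤ b-a) (by linarith : (0:ℤ) ≤ F + Ya - Yc)]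
  -- 2 aEbEcE >
  · linarith [mul_nonneg (by linarith : (0:ℤ) ≤ Yb-Ya+F') (by linarith : (0:ℤ) ≤ 2*c-2*a-1),
      mul_nonneg (by linarith : (0:ℤ) ≤ F') (by linarith : (0:ℤ) ≤ 2*W-3-(2*c-2*a-1)),
      h3c, hWF4, hW8,
      mul_nonneg (by linarith : (0:ℤ) ≤ b-a) (by linarith : (0:ℤ) ≤ F + Ya - Yc)]
  -- 3 aEbEcO ≤
  · linarith [mul_nonneg (by linarith : (0:ℤ) ≤ F' - (Yb-Ya)) (by linarith : (0:ℤ) ≤ 2*a-2*c+1),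
      mul_nonneg (by linarith : (0:ℤ) ≤ F') (by linarith : (0:ℤ) ≤ 2*W-3-(2*a-2*c+1)),
      h3c, hWF4, hW8,
      mul_nonneg (by linarith : (0:ℤ) ≤ b-a) (by linarith : (0:ℤ) ≤ F + Ya - Yc)]
  -- 4 aEbEcO >
  · linarith [mul_nonneg (by linarith : (0:ℤ) ≤ Yb-Ya+F') (by linarith : (0:ℤ) ≤ 2*c-2*a-1),
      mul_nonneg (by linarith : (0:ℤ) ≤ F') (by linarith : (0:ℤ) ≤ 2*W-3-(2*c-2*a-1)),
      h3c, hWF4, hW8,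
      mul_nonneg (by linarith : (0:ℤ) ≤ b-a) (by linarith : (0:ℤ) ≤ F + Ya - Yc)]
  -- 5 aEbOcE ≤
  · linarith [mul_nonneg (by linarith : (0:ℤ) ≤ F - (Yb-Ya)) (by linarith : (0:ℤ) ≤ 2*a-2*c+1),
      mul_nonneg (by linarith : (0:ℤ) ≤ F) (by linarith : (0:ℤ) ≤ 2*W-3-(2*a-2*c+1)),
      h3d,
      mul_nonneg (by linarith : (0:ℤ) ≤ b-a) (by linarith : (0:ℤ) ≤ Ya - Yc + F')]
  -- 6 aEbOcE >
  · linarith [mul_nonneg (by linarith : (0:ℤ) ≤ Yb-Ya) (by linarith : (0:ℤ) ≤ 2*c-2*a-1),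
      h3c, hWF4, hW8,
      mul_nonneg (by linarith : (0:ℤ) ≤ b-a) (by linarith : (0:ℤ) ≤ F + Ya - Yc)]
  -- 7 aEbOcO ≤  (c ≥ 1)
  · have hc1 : 1 ≤ c := by omega
    linarith [mul_nonneg (by linarith : (0:ℤ) ≤ F - (Yb-Ya)) (by linarith : (0:ℤ) ≤ 2*a-2*c+1),
      mul_nonneg (by linarith : (0:ℤ) ≤ F) (by linarith : (0:ℤ) ≤ 2*W-5-(2*a-2*c+1)),
      h3c,
      mul_nonneg (by linarith : (0:ℤ) ≤ b-a) (by linarith : (0:ℤ) ≤ F + Ya - Yc)]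
  -- 8 aEbOcO >
  · linarith [mul_nonneg (by linarith : (0:ℤ) ≤ Yb-Ya) (by linarith : (0:ℤ) ≤ 2*c-2*a-1),
      h3c, hWF4, hW8,
      mul_nonneg (by linarith : (0:ℤ) ≤ b-a) (by linarith : (0:ℤ) ≤ F + Ya - Yc)]
  -- 9 aObEcE ≤
  · linarith [mul_nonneg (by linarith : (0:ℤ) ≤ F' - (Yb-Ya)) (by linarith : (0:ℤ) ≤ 2*a-2*c+1),
      mul_nonneg (by linarith : (0:ℤ) ≤ F') (by linarith : (0:ℤ) ≤ 2*W-3-(2*a-2*c+1)),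
      h3c, hWF4, hW8,
      mul_nonneg (by linarith : (0:ℤ) ≤ b-a) (by linarith : (0:ℤ) ≤ F + Ya - Yc)]
  -- 10 aObEcE >  (a ≥ 1)
  · have ha1 : 1 ≤ a := by omega
    linarith [mul_nonneg (by linarith : (0:ℤ) ≤ Yb-Ya+F) (by linarith : (0:ℤ) ≤ 2*c-2*a-1),
      mul_nonneg (by linarith : (0:ℤ) ≤ F) (by linarith : (0:ℤ) ≤ 2*W-5-(2*c-2*a-1)),
      h3d,
      mul_nonneg (by linarith : (0:ℤ) ≤ b-a) (by linarith : (0:ℤ) ≤ Ya - Yc + F')]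
  -- 11 aObEcO ≤
  · linarith [mul_nonneg (by linarith : (0:ℤ) ≤ F' - (Yb-Ya)) (by linarith : (0:ℤ) ≤ 2*a-2*c+1),
      mul_nonneg (by linarith : (0:ℤ) ≤ F') (by linarith : (0:ℤ) ≤ 2*W-3-(2*a-2*c+1)),
      h3c, hWF4, hW8,
      mul_nonneg (by linarith : (0:ℤ) ≤ b-a) (by linarith : (0:ℤ) ≤ F + Ya - Yc)]
  -- 12 aObEcO >  (a ≥ 1)
  · have ha1 : 1 ≤ a := by omega
    linarith [mul_nonneg (by linarith : (0:ℤ) ≤ Yb-Ya+F) (by linarith : (0:ℤ) ≤ 2*c-2*a-1),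
      mul_nonneg (by linarith : (0:ℤ) ≤ F) (by linarith : (0:ℤ) ≤ 2*W-5-(2*c-2*a-1)),
      h3d,
      mul_nonneg (by linarith : (0:ℤ) ≤ b-a) (by linarith : (0:ℤ) ≤ Ya - Yc + F')]
  -- 13 aObOcE ≤
  · linarith [mul_nonneg (by linarith : (0:ℤ) ≤ F' - (Yb-Ya)) (by linarith : (0:ℤ) ≤ 2*a-2*c+1),
      mul_nonneg (by linarith : (0:ℤ) ≤ F') (by linarith : (0:ℤ) ≤ 2*W-3-(2*a-2*c+1)),
      h3c, hWF4, hW8,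
      mul_nonneg (by linarith : (0:ℤ) ≤ b-a) (by linarith : (0:ℤ) ≤ F + Ya - Yc)]
  -- 14 aObOcE >
  · linarith [mul_nonneg (by linarith : (0:ℤ) ≤ Yb-Ya+F') (by linarith : (0:ℤ) ≤ 2*c-2*a-1),
      mul_nonneg (by linarith : (0:ℤ) ≤ F') (by linarith : (0:ℤ) ≤ 2*W-3-(2*c-2*a-1)),
      h3c, hWF4, hW8,
      mul_nonneg (by linarith : (0:ℤ) ≤ b-a) (by linarith : (0:ℤ) ≤ F + Ya - Yc)]
  -- 15 aObOcO ≤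
  · linarith [mul_nonneg (by linarith : (0:ℤ) ≤ F' - (Yb-Ya)) (by linarith : (0:ℤ) ≤ 2*a-2*c+1),
      mul_nonneg (by linarith : (0:ℤ) ≤ F') (by linarith : (0:ℤ) ≤ 2*W-3-(2*a-2*c+1)),
      h3c, hWF4, hW8,
      mul_nonneg (by linarith : (0:ℤ) ≤ b-a) (by linarith : (0:ℤ) ≤ F + Ya - Yc)]
  -- 16 aObOcO >
  · linarith [mul_nonneg (by linarith : (0:ℤ) ≤ Yb-Ya+F') (by linarith : (0:ℤ) ≤ 2*c-2*a-1),
      mul_nonneg (by linarith : (0:ℤ) ≤ F') (by linarith : (0:ℤ) ≤ 2*W-3-(2*c-2*a-1)),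
      h3c, hWF4, hW8,
      mul_nonneg (by linarith : (0:ℤ) ≤ b-a) (by linarith : (0:ℤ) ≤ F + Ya - Yc)]

lemma level_info {n : ℕ} (hn : 1 ≤ n) {q : ℤ×ℤ} (hq : q ∈ P n) :
    (q.1 % 2 = 0 ∧ 0 ≤ q.2 ∧ q.2 ≤ f (n-1)) ∨
    (q.1 % 2 = 1 ∧ f n - f (n-1) ≤ q.2 ∧ q.2 ≤ f n) := by
  obtain ⟨m, rfl⟩ : ∃ m, n = m + 1 := ⟨n - 1, by omega⟩
  have hstep := f_step m
  rcases mem_P_succ hq with ⟨u, hu, rfl⟩ | ⟨u, hu, rfl⟩ <;>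
    obtain ⟨h1, h2, h3, h4⟩ := P_bounds m u hu <;>
    simp only [Nat.add_sub_cancel]
  · exact Or.inl ⟨by omega, h3, h4⟩
  · exact Or.inr ⟨by omega, by linarith, by linarith⟩

/-- Every point of `P k` with even x-coordinate lies strictly below every line
determined by two points of `P k` with odd x-coordinate. -/
theorem even_below_odd_lines :
    ∀ k : ℕ, 5 ≤ k → ∀ p ∈ P k, ∀ q ∈ P k, ∀ r ∈ P k,
      Odd p.1 → Odd q.1 → p.1 < q.1 → Even r.1 →
      det3 p q r < 0 := by
  intro k hk p hp q hq r hr hop hoq hpq her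
  obtain ⟨m, rfl⟩ : ∃ m, k = m + 1 := ⟨k - 1, by omega⟩
  have hm : 4 ≤ m := by omega
  -- decompose p (odd)
  obtain ⟨pa, hpa, hpe⟩ : ∃ u ∈ P m, p = (2*u.1+1, u.2 + g (m+1)) := by
    rcases mem_P_succ hp with ⟨u, hu, he⟩ | h
    · exfalso; obtain ⟨t, ht⟩ := hop; rw [he] at ht; simp at ht; omega
    · exact h
  obtain ⟨qa, hqa, hqe⟩ : ∃ u ∈ P m, q = (2*u.1+1, u.2 + g (m+1)) := by
    rcases mem_P_succ hq with ⟨u, hu, he⟩ | h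
    · exfalso; obtain ⟨t, ht⟩ := hoq; rw [he] at ht; simp at ht; omega
    · exact h
  obtain ⟨ra, hra, hre⟩ : ∃ u ∈ P m, r = (2*u.1, u.2) := by
    rcases mem_P_succ hr with h | ⟨u, hu, he⟩
    · exact h
    · exfalso; obtain ⟨t, ht⟩ := her; rw [he] at ht; simp at ht; omega
  subst hpe; subst hqe; subst hre
  -- now p = (2*pa.1+1, pa.2 + g (m+1)), q likewise, r = (2*ra.1, ra.2)
  set a := pa.1; set Ya := pa.2
  set b := qa.1; set Yb := qa.2
  set c := ra.1; set Yc := ra.2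
  have hab : a < b := by simp only [a, b] at hpq ⊢; omega
  obtain ⟨ha0, haW, -, -⟩ := P_bounds m pa hpa
  obtain ⟨hb0, hbW, -, -⟩ := P_bounds m qa hqa
  obtain ⟨hc0, hcW, -, -⟩ := P_bounds m ra hra
  have hA := level_info (by omega) hpa
  have hB := level_info (by omega) hqa
  have hC := level_info (by omega) hra
  have hm1 : m - 1 + 1 = m := by omega
  have hF1 : 1 ≤ f (m-1) := f_one_le (by omega)
  have hFr : f m = 2^(m-1) * f (m-1) := by
    have := f_succ (n := m-1) (by omega)
    rwa [hm1] at this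
  have hF4 : 4 * f (m-1) ≤ f m := by
    have h2 : (4:ℤ) ≤ 2^(m-1) := by
      calc (4:ℤ) = 2^2 := by norm_num
      _ ≤ 2^(m-1) := pow_le_pow_right₀ (by norm_num) (by omega)
    nlinarith [f_nonneg (m-1)]
  have hGr : g (m+1) = ((2:ℤ)^m - 1) * f m := by
    have h1 : g (m+1) = f (m+1) - f m := by
      have := f_step m; linarith
    rw [h1, f_succ (by omega : 2 ≤ m)]; ring
  have hW8 : (8:ℤ) ≤ 2^m := by
    calc (8:ℤ) = 2^3 := by norm_num
    _ ≤ 2^m := pow_le_pow_right₀ (by norm_num) (by omega)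
  have hkey := key ((2:ℤ)^m) (f (m-1)) (f m) (g (m+1)) a b c Ya Yb Yc
    hW8 hF1 hF4 hGr ha0 hab hbW hc0 hcW hA hB hC
  show (2*b+1 - (2*a+1)) * (Yc - (Ya + g (m+1))) - (Yb + g (m+1) - (Ya + g (m+1))) * (2*c - (2*a+1)) < 0
  linarith [hkey]
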